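/- Let X be a nonempty set, k a field of characteristic 0, and N : X × X → ℕ. For all x,y ∈ X, n,m ∈ ℤ, and every L ∈ ℕ with L ≥ N(y,x), the polynomial f^{0,1}_{x,y}(n,m;L) = Σ_{t=0}^{L} (−1)^t C(L,t) x^(0)(n−t) y^(1)(m+t) belongs to the ideal I(N). -/

import Mathlib

noncomputable section

/-- The polynomial algebra `F = k[B^(ω)]` in the variables `a^(p)(n)`
(`a ∈ X`, `p ∈ ℕ`, `n ∈ ℤ`), encoded as triples `(a, p, n)`. -/
abbrev FreeDiffAlg (k X : Type*) [CommRing k] : Type _ :=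
  MvPolynomial (X × ℕ × ℤ) k

/-- The derivation `d : F → F` determined by `d(a^(p)(n)) = a^(p+1)(n)`. -/
def derD (k X : Type*) [CommRing k] :
    Derivation k (FreeDiffAlg k X) (FreeDiffAlg k X) :=
  MvPolynomial.mkDerivation k fun v : X × ℕ × ℤ =>
    MvPolynomial.X (v.1, v.2.1 + 1, v.2.2)

/-- The weight of the variable `a^(p)(n)` is `p - 1`. -/
def wtVar {X : Type*} (v : X × ℕ × ℤ) : ℤ := (v.2.1 : ℤ) - 1

/-- `F_w`: the `k`-span of the monomials of weight `w` (the weight of a monomial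
is the sum of the weights of its variables, counted with multiplicity). -/
def Fwt (k X : Type*) [CommRing k] (w : ℤ) : Submodule k (FreeDiffAlg k X) :=
  MvPolynomial.weightedHomogeneousSubmodule k (wtVar (X := X)) w

/-- The weight of a monomial (given by its exponent function). -/
def wtMon {X : Type*} (s : (X × ℕ × ℤ) →₀ ℕ) : ℤ :=
  s.sum fun v c => (c : ℤ) * wtVar v

/-- `f^{p,q}_{a,b}(n, m; L) = Σ_{t=0}^{L} (−1)^t C(L,t) a^(p)(n−t) b^(q)(m+t)`. -/
def fpq (k : Type*) {X : Type*} [CommRing k] (a b : X) (p q : ℕ)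
    (n m : ℤ) (L : ℕ) : FreeDiffAlg k X :=
  ∑ t ∈ Finset.range (L + 1),
    ((-1 : k) ^ t * (L.choose t : k)) •
      (MvPolynomial.X (a, p, n - (t : ℤ)) * MvPolynomial.X (b, q, m + (t : ℤ)))

/-- The ideal `I(N)` generated by all `d^l(f_{a,b}(n,m))`,
where `f_{a,b}(n,m) = f^{1,0}_{a,b}(n, m; N(a,b))`. -/
def idealI (k : Type*) {X : Type*} [CommRing k] (N : X × X → ℕ) :
    Ideal (FreeDiffAlg k X) :=
  Ideal.span { g | ∃ (a b : X) (n m : ℤ) (l : ℕ),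
    g = (⇑(derD k X))^[l] (fpq k a b 1 0 n m (N (a, b))) }

/-- The ideal `K(N̄)` generated by all `d^l(f^{p,q}_{a,b}(n, m; N̄((a,p),(b,q))))`. -/
def idealK (k : Type*) {X : Type*} [CommRing k]
    (Nbar : (X × ℕ) × (X × ℕ) → ℕ) : Ideal (FreeDiffAlg k X) :=
  Ideal.span { g | ∃ (a b : X) (p q l : ℕ) (n m : ℤ),
    g = (⇑(derD k X))^[l] (fpq k a b p q n m (Nbar ((a, p), (b, q)))) }

/-!
Reindexing the sum by `t ↦ L - t` gives `f^{0,1}_{x,y}(n, m; L) = ± f^{1,0}_{y,x}(m + L, n - L; L)`,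
so it suffices to show `f^{1,0}_{a,b}(n, m; L) ∈ I(N)` for `L ≥ N(a,b)`. Pascal's rule gives
`f(n, m; L + 1) = f(n, m; L) - f(n - 1, m + 1; L)`, and induction on `L`, starting from the
generators `f_{a,b}(n, m)` at `L = N(a,b)`, finishes the proof.
-/

open Finset

theorem neg_one_pow_sub_of_le {R : Type*} [Ring R] {t L : ℕ} (h : t ≤ L) :
    (-1 : R) ^ (L - t) = (-1) ^ L * (-1) ^ t := by
  rw [← pow_add, show L + t = L - t + 2 * t by omega, pow_add, pow_mul]
  simp

section AlternatingBinomialSum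

variable {R M : Type*} [CommRing R] [AddCommGroup M] [Module R M]

theorem sum_range_succ_neg_one_pow_mul_choose_smul (G : ℕ → M) (L : ℕ) :
    ∑ t ∈ range (L + 2), ((-1 : R) ^ t * (L + 1).choose t) • G t =
      ∑ t ∈ range (L + 1), ((-1 : R) ^ t * L.choose t) • G t -
        ∑ t ∈ range (L + 1), ((-1 : R) ^ t * L.choose t) • G (t + 1) := by
  have pascal (t : ℕ) : ((-1 : R) ^ (t + 1) * (L + 1).choose (t + 1)) • G (t + 1) =
      ((-1 : R) ^ (t + 1) * L.choose (t + 1)) • G (t + 1) -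
        ((-1 : R) ^ t * L.choose t) • G (t + 1) := by
    rw [Nat.choose_succ_succ, ← sub_smul]
    congr 1
    push_cast
    ring
  have shifted : ∑ t ∈ range (L + 1), ((-1 : R) ^ (t + 1) * L.choose (t + 1)) • G (t + 1) + G 0 =
      ∑ t ∈ range (L + 1), ((-1 : R) ^ t * L.choose t) • G t := by
    have := sum_range_succ' (fun t => ((-1 : R) ^ t * L.choose t) • G t) (L + 1)
    rw [sum_range_succ, Nat.choose_succ_self] at this
    simpa using this.symm
  rw [sum_range_succ', sum_congr rfl fun t _ => pascal t, sum_sub_distrib, ← shifted]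
  simp only [pow_zero, Nat.choose_zero_right, Nat.cast_one, mul_one, one_smul]
  abel

theorem sum_range_neg_one_pow_mul_choose_smul_reflect (G : ℕ → M) (L : ℕ) :
    ∑ t ∈ range (L + 1), ((-1 : R) ^ t * L.choose t) • G t =
      (-1 : R) ^ L • ∑ t ∈ range (L + 1), ((-1 : R) ^ t * L.choose t) • G (L - t) := by
  rw [← sum_range_reflect, smul_sum]
  refine sum_congr rfl fun t ht => ?_
  have htL : t ≤ L := Nat.lt_succ_iff.mp (mem_range.mp ht)
  rw [Nat.add_sub_cancel, smul_smul, Nat.choose_symm htL, neg_one_pow_sub_of_le htL, mul_assoc]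

end AlternatingBinomialSum

theorem fpq_succ (k : Type*) {X : Type*} [CommRing k] (a b : X) (p q : ℕ) (n m : ℤ) (L : ℕ) :
    fpq k a b p q n m (L + 1) = fpq k a b p q n m L - fpq k a b p q (n - 1) (m + 1) L := by
  unfold fpq
  rw [sum_range_succ_neg_one_pow_mul_choose_smul]
  congr 1
  refine sum_congr rfl fun t _ => ?_
  rw [Nat.cast_succ, ← sub_sub, sub_right_comm n, ← add_assoc, add_right_comm m]

theorem fpq_swap (k : Type*) {X : Type*} [CommRing k] (a b : X) (p q : ℕ) (n m : ℤ) (L : ℕ) :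
    fpq k a b p q n m L = (-1 : k) ^ L • fpq k b a q p (m + L) (n - L) L := by
  unfold fpq
  rw [sum_range_neg_one_pow_mul_choose_smul_reflect]
  congr 1
  refine sum_congr rfl fun t ht => ?_
  rw [Nat.cast_sub (Nat.lt_succ_iff.mp (mem_range.mp ht)), ← sub_add, ← add_sub_assoc,
    mul_comm (MvPolynomial.X (b, q, _))]

theorem fpq_one_zero_mem_idealI (k : Type*) {X : Type*} [CommRing k] (N : X × X → ℕ)
    (a b : X) {L : ℕ} (hL : N (a, b) ≤ L) (n m : ℤ) : fpq k a b 1 0 n m L ∈ idealI k N := by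
  induction L, hL using Nat.le_induction generalizing n m with
  | base => exact Ideal.subset_span ⟨a, b, n, m, 0, rfl⟩
  | succ L _ ih =>
    rw [fpq_succ]
    exact sub_mem (ih n m) (ih (n - 1) (m + 1))

theorem fpq_zero_one_mem_idealI_general
    (k X : Type*) [Field k]
    (N : X × X → ℕ) (x y : X) (n m : ℤ) (L : ℕ) (hL : N (y, x) ≤ L) :
    fpq k x y 0 1 n m L ∈ idealI k N := by
  rw [fpq_swap, MvPolynomial.smul_eq_C_mul]
  exact Ideal.mul_mem_left _ _ (fpq_one_zero_mem_idealI k N y x hL _ _)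

/-- `f^{0,1}_{x,y}(n, m; L) ∈ I(N)` whenever `L ≥ N(y,x)`. -/
theorem fpq_zero_one_mem_idealI
    (k X : Type*) [Field k] [CharZero k] [Nonempty X]
    (N : X × X → ℕ) (x y : X) (n m : ℤ) (L : ℕ) (hL : N (y, x) ≤ L) :
    fpq k x y 0 1 n m L ∈ idealI k N :=
  fpq_zero_one_mem_idealI_general k X N x y n m L hL

end
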